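/- With the notation of the context: if λ₂·α ≤ (λ₁+1)/(λ₁−1), then Φ(1) ∈ (0, π]; and if λ₂·α > (λ₁+1)/(λ₁−1), then Φ(1) ∈ (π, 2π). (This is Lemma 2.10: for lifts A, B of the hyperbolic element τ_{∞,0}(λ₁) and the parabolic element π_α(λ₂) to the m-fold covering group of PSL(2,ℝ), lev_m(A·B) − lev_m(A) − lev_m(B) equals 0 if λ₂α ≤ (λ₁+1)/(λ₁−1) and equals 1 otherwise.) -/

import Mathlib

/-- `λ₁(t) = 1 + t(λ₁−1)`, deforming the shift parameter from `1` to `λ₁`. -/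
noncomputable def lamt (l t : ℝ) : ℝ := 1 + t * (l - 1)

/-- The hyperbolic element `τ_{∞,0}(λ₁(t))` of `SL(2,ℝ)` as a matrix. -/
noncomputable def matA (l1 t : ℝ) : Matrix (Fin 2) (Fin 2) ℝ :=
  !![Real.sqrt (lamt l1 t), 0; 0, (Real.sqrt (lamt l1 t))⁻¹]

/-- The parabolic element `π_α(t·λ₂)` of `SL(2,ℝ)` with fixed point `α`. -/
noncomputable def matB (l2 α t : ℝ) : Matrix (Fin 2) (Fin 2) ℝ :=
  !![1 - t * l2 * α, t * l2 * α ^ 2; -(t * l2), 1 + t * l2 * α]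

/-- The product path `M(t) = A(t)·B(t)`. -/
noncomputable def matM (l1 l2 α t : ℝ) : Matrix (Fin 2) (Fin 2) ℝ :=
  matA l1 t * matB l2 α t

/-- `w(t) = (a(t)+d(t)) + i(b(t)−c(t))`. -/
noncomputable def wfun (l1 l2 α t : ℝ) : ℂ :=
  ((matM l1 l2 α t 0 0 + matM l1 l2 α t 1 1 : ℝ) : ℂ) +
    Complex.I * ((matM l1 l2 α t 0 1 - matM l1 l2 α t 1 0 : ℝ) : ℂ)

/-
For `t > 0` the imaginary part `t λ₂ (√λ₁(t) α² + 1/√λ₁(t))` of `w(t)` is positive, and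
`w(0) = 2`, so the path `w` never meets the branch cut of `arg`. Hence `t ↦ 2 arg w(t)` is itself
a continuous lift with value `0` at `t = 0`; since `Φ − 2 arg w` is continuous with values in
`2πℤ`, it vanishes, and `Φ(1) = 2 arg w(1) ∈ (0, 2π)`. Finally
`Re w(1) = √λ₁ ((λ₁+1) − λ₂α(λ₁−1)) / λ₁`, and `arg w(1) ≤ π/2` exactly when this is nonnegative.
-/

open Complex Set

lemma two_mul_arg_sub_mem_zmultiples {z : ℂ} (hz : z ≠ 0) {φ : ℝ}
    (hφ : exp (I * φ) = (z / (‖z‖ : ℂ)) ^ 2) :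
    φ - 2 * arg z ∈ AddSubgroup.zmultiples (2 * Real.pi) := by
  have hunit : z / (‖z‖ : ℂ) = exp (arg z * I) := by
    rw [div_eq_iff (by exact_mod_cast norm_ne_zero_iff.mpr hz), mul_comm,
      norm_mul_exp_arg_mul_I]
  rw [hunit, ← exp_nat_mul, exp_eq_exp_iff_exists_int] at hφ
  obtain ⟨n, hn⟩ := hφ
  have him : φ = 2 * arg z + n * (2 * Real.pi) := by simpa using congrArg im hn
  exact AddSubgroup.mem_zmultiples_iff.mpr ⟨n, by rw [zsmul_eq_mul]; linarith⟩

theorem IsPreconnected.eq_two_mul_arg_of_exp_eq {X : Type*} [TopologicalSpace X] {S : Set X}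
    (hS : IsPreconnected S) {f : X → ℂ} (hf : ContinuousOn f S) (hslit : MapsTo f S slitPlane)
    {Φ : X → ℝ} (hΦc : ContinuousOn Φ S)
    (hΦ : ∀ t ∈ S, exp (I * Φ t) = (f t / (‖f t‖ : ℂ)) ^ 2)
    {x y : X} (hx : x ∈ S) (hy : y ∈ S) (hxΦ : Φ x = 2 * arg (f x)) :
    Φ y = 2 * arg (f y) := by
  have hdisc : IsDiscrete (AddSubgroup.zmultiples (2 * Real.pi) : Set ℝ) :=
    isDiscrete_iff_discreteTopology.mpr
      (inferInstance : DiscreteTopology (AddSubgroup.zmultiples (2 * Real.pi)))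
  have harg : ContinuousOn (fun t => arg (f t)) S :=
    continuousOn_arg.comp hf hslit
  have hconst := hS.constant_of_mapsTo (f := fun t => Φ t - 2 * arg (f t)) hdisc
    (hΦc.sub (continuousOn_const.mul harg))
    (fun t ht => two_mul_arg_sub_mem_zmultiples (slitPlane_ne_zero (hslit ht)) (hΦ t ht)) hx hy
  beta_reduce at hconst
  linarith

lemma arg_mem_Ioo_of_im_pos {z : ℂ} (hz : 0 < z.im) : arg z ∈ Ioo 0 Real.pi :=
  ⟨(arg_nonneg_iff.mpr hz.le).lt_of_ne fun h => hz.ne' (arg_eq_zero_iff.mp h.symm).2,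
    arg_lt_pi_iff.mpr (Or.inr hz.ne')⟩

lemma arg_le_pi_div_two_iff_of_im_pos {z : ℂ} (hz : 0 < z.im) :
    arg z ≤ Real.pi / 2 ↔ 0 ≤ z.re := by
  rw [arg_le_pi_div_two_iff, or_iff_left hz.not_gt]

lemma lamt_pos {l t : ℝ} (hl : 0 < l) (ht : t ∈ Icc (0 : ℝ) 1) : 0 < lamt l t := by
  unfold lamt
  rcases le_total 1 l with h | h <;> nlinarith [ht.1, ht.2]

lemma wfun_re (l1 l2 α t : ℝ) :
    (wfun l1 l2 α t).re =
      √(lamt l1 t) * (1 - t * l2 * α) + (√(lamt l1 t))⁻¹ * (1 + t * l2 * α) := by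
  rw [wfun, add_re, ofReal_re, I_mul_re, ofReal_im, neg_zero, add_zero]
  simp [matM, matA, matB, Matrix.mul_apply, Fin.sum_univ_two]

lemma wfun_im (l1 l2 α t : ℝ) :
    (wfun l1 l2 α t).im = t * l2 * (√(lamt l1 t) * α ^ 2 + (√(lamt l1 t))⁻¹) := by
  rw [wfun, add_im, ofReal_im, I_mul_im, ofReal_re, zero_add]
  simp only [matM, matA, matB, Fin.isValue, Matrix.mul_apply, Matrix.of_apply, Matrix.cons_val',
    Matrix.cons_val_fin_one, Matrix.cons_val_zero, Matrix.cons_val_one, Fin.sum_univ_two, zero_mul,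
    add_zero, mul_neg, zero_add, sub_neg_eq_add]
  ring

lemma wfun_zero (l1 l2 α : ℝ) : wfun l1 l2 α 0 = 2 :=
  Complex.ext (by simp [wfun_re, lamt]; norm_num) (by simp [wfun_im])

lemma wfun_im_pos {l1 l2 α t : ℝ} (hlam : 0 < lamt l1 t) (hl2 : 0 < l2) (ht : 0 < t) :
    0 < (wfun l1 l2 α t).im := by
  rw [wfun_im]
  positivity

lemma continuousOn_wfun {l1 : ℝ} (hl1 : 0 < l1) (l2 α : ℝ) :
    ContinuousOn (wfun l1 l2 α) (Icc 0 1) := by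
  have hsqrt : ContinuousOn (fun t => √(lamt l1 t)) (Icc 0 1) :=
    (Real.continuous_sqrt.comp (by unfold lamt; fun_prop)).continuousOn
  have hinv : ContinuousOn (fun t => (√(lamt l1 t))⁻¹) (Icc 0 1) :=
    hsqrt.inv₀ fun t ht => (Real.sqrt_pos.mpr (lamt_pos hl1 ht)).ne'
  have hre : ContinuousOn (fun t => (wfun l1 l2 α t).re) (Icc 0 1) := by
    simp only [wfun_re]; fun_prop
  have him : ContinuousOn (fun t => (wfun l1 l2 α t).im) (Icc 0 1) := by
    simp only [wfun_im]; fun_prop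
  rw [show wfun l1 l2 α = fun t => ((wfun l1 l2 α t).re : ℂ) + (wfun l1 l2 α t).im * I from
    funext fun t => (re_add_im _).symm]
  exact (continuous_ofReal.comp_continuousOn hre).add
    ((continuous_ofReal.comp_continuousOn him).mul continuousOn_const)

lemma wfun_mem_slitPlane {l1 l2 α t : ℝ} (hl1 : 0 < l1) (hl2 : 0 < l2)
    (ht : t ∈ Icc (0 : ℝ) 1) :
    wfun l1 l2 α t ∈ slitPlane := by
  rcases ht.1.eq_or_lt with rfl | ht0
  · rw [wfun_zero]; exact ofReal_mem_slitPlane.mpr two_pos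
  · exact mem_slitPlane_iff.mpr (Or.inr (wfun_im_pos (lamt_pos hl1 ht) hl2 ht0).ne')

lemma wfun_one_re_nonneg_iff {l1 : ℝ} (hl1 : 1 < l1) (l2 α : ℝ) :
    0 ≤ (wfun l1 l2 α 1).re ↔ l2 * α ≤ (l1 + 1) / (l1 - 1) := by
  have hl1' : 0 < l1 := by linarith
  have hre : (wfun l1 l2 α 1).re = √l1 / l1 * ((l1 + 1) - l2 * α * (l1 - 1)) := by
    rw [wfun_re, show lamt l1 1 = l1 by simp [lamt]]
    field_simp
    linear_combination (-(1 + l2 * α)) * Real.sq_sqrt hl1'.le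
  rw [hre, le_div_iff₀ (by linarith), mul_nonneg_iff_of_pos_left (by positivity)]
  constructor <;> intro h <;> linarith

theorem lemma210_general (l1 l2 α : ℝ) (hl1 : 1 < l1) (hl2 : 0 < l2)
    (Φ : ℝ → ℝ) (hΦc : ContinuousOn Φ (Set.Icc 0 1)) (hΦ0 : Φ 0 = 0)
    (hΦ : ∀ t ∈ Set.Icc (0 : ℝ) 1,
      Complex.exp (Complex.I * (Φ t : ℂ))
        = (wfun l1 l2 α t / (‖wfun l1 l2 α t‖ : ℂ)) ^ 2) :
    (l2 * α ≤ (l1 + 1) / (l1 - 1) → Φ 1 ∈ Set.Ioc 0 Real.pi) ∧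
    ((l1 + 1) / (l1 - 1) < l2 * α → Φ 1 ∈ Set.Ioo Real.pi (2 * Real.pi)) := by
  have hl1' : 0 < l1 := by linarith
  have hΦ1 : Φ 1 = 2 * arg (wfun l1 l2 α 1) :=
    isPreconnected_Icc.eq_two_mul_arg_of_exp_eq (continuousOn_wfun hl1' l2 α)
      (fun t ht => wfun_mem_slitPlane hl1' hl2 ht) hΦc hΦ (left_mem_Icc.mpr zero_le_one)
      (right_mem_Icc.mpr zero_le_one) (by simp [hΦ0, wfun_zero])
  have him : 0 < (wfun l1 l2 α 1).im :=
    wfun_im_pos (lamt_pos hl1' (right_mem_Icc.mpr zero_le_one)) hl2 one_pos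
  have harg := arg_mem_Ioo_of_im_pos him
  have hquarter := (arg_le_pi_div_two_iff_of_im_pos him).trans (wfun_one_re_nonneg_iff hl1 l2 α)
  rw [hΦ1]
  refine ⟨fun h => ?_, fun h => ?_⟩
  · have := hquarter.mpr h
    constructor <;> linarith [harg.1]
  · have := (not_congr hquarter).mpr h.not_ge
    constructor <;> linarith [harg.2]

/-- Lemma 2.10: for lifts of the hyperbolic element `τ_{∞,0}(λ₁)` and the parabolic
element `π_α(λ₂)`, if `λ₂α ≤ (λ₁+1)/(λ₁−1)` then `Φ(1) ∈ (0, π]`, and if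
`λ₂α > (λ₁+1)/(λ₁−1)` then `Φ(1) ∈ (π, 2π)`. -/
theorem lemma210 (l1 l2 α : ℝ) (hl1 : 1 < l1) (hl2 : 0 < l2) (hα : 0 < α)
    (Φ : ℝ → ℝ) (hΦc : ContinuousOn Φ (Set.Icc 0 1)) (hΦ0 : Φ 0 = 0)
    (hΦ : ∀ t ∈ Set.Icc (0 : ℝ) 1,
      Complex.exp (Complex.I * (Φ t : ℂ))
        = (wfun l1 l2 α t / (‖wfun l1 l2 α t‖ : ℂ)) ^ 2) :
    (l2 * α ≤ (l1 + 1) / (l1 - 1) → Φ 1 ∈ Set.Ioc 0 Real.pi) ∧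
    ((l1 + 1) / (l1 - 1) < l2 * α → Φ 1 ∈ Set.Ioo Real.pi (2 * Real.pi)) :=
  lemma210_general l1 l2 α hl1 hl2 Φ hΦc hΦ0 hΦ
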